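/- Let n ≥ 2, p ≥ 1, and let X be a random vector uniformly distributed on the ℓ_p unit ball B_p^n. Set ξ1 = (e1+e2)/√2, ξ2 = (e1−e2)/√2 and define f(η1,η2) = E[⟨X,η1⟩²⟨X,η2⟩²] − E[⟨X,η1⟩²]·E[⟨X,η2⟩²]. Then for every pair of orthonormal vectors η1 = (η1(1),…,η1(n)), η2 = (η2(1),…,η2(n)) in S^{n−1}, f(η1,η2) = f(e1,e2) + 2·(f(ξ1,ξ2) − f(e1,e2)) · Σ_{i=1}^n η1(i)² η2(i)². -/

import Mathlib

open MeasureTheory Real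
open scoped RealInnerProductSpace ENNReal

noncomputable section

/-- `ℝⁿ` with the Euclidean structure. -/
abbrev E (n : ℕ) := EuclideanSpace ℝ (Fin n)

/-- The unit ball of the `ℓ_p` norm on `ℝⁿ`. -/
def lpBall (n : ℕ) (p : ℝ) : Set (E n) := {x | ∑ i, |x i| ^ p ≤ 1}

/-- The uniform probability measure (normalized Lebesgue measure) on a set `K ⊆ ℝⁿ`. -/
def unif {n : ℕ} (K : Set (E n)) : Measure (E n) := (volume K)⁻¹ • volume.restrict K

/-- `f(η₁,η₂) = E⟨X,η₁⟩²⟨X,η₂⟩² - E⟨X,η₁⟩² E⟨X,η₂⟩²` for `X` distributed according to `μ`. -/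
def covf {n : ℕ} (μ : Measure (E n)) (a b : E n) : ℝ :=
  (∫ x, ⟪x, a⟫ ^ 2 * ⟪x, b⟫ ^ 2 ∂μ) - (∫ x, ⟪x, a⟫ ^ 2 ∂μ) * (∫ x, ⟪x, b⟫ ^ 2 ∂μ)

/-- The canonical basis vectors of `ℝⁿ`. -/
def stdb {n : ℕ} (i : Fin n) : E n := EuclideanSpace.single i 1


/-!
The uniform measure on `B_p^n` is invariant under permutations and sign changes of the
coordinates. A sign change of the coordinate `t` kills every moment `E[xᵢxⱼxₖxₗ]` in which `t`
occurs exactly once, and permutations identify the surviving moments with `A = E[x₁⁴]` or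
`B = E[x₁²x₂²]`; similarly `E[xᵢxⱼ] = m δᵢⱼ`. Expanding `⟨x,η₁⟩²⟨x,η₂⟩²` then shows that for
orthonormal `η₁, η₂`
  `f(η₁,η₂) = B - m² + (A - 3B) ∑ᵢ η₁(i)²η₂(i)²`,
an affine function of `∑ᵢ η₁(i)²η₂(i)²`, which equals `0` at `(e₁,e₂)` and `1/2` at `(ξ₁,ξ₂)`.
-/

variable {n : ℕ}

def signFlip (t : Fin n) : E n ≃ₗᵢ[ℝ] E n :=
  LinearIsometryEquiv.piLpCongrRight 2
    (fun i => if i = t then LinearIsometryEquiv.neg ℝ else LinearIsometryEquiv.refl ℝ ℝ)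

@[simp]
lemma signFlip_apply (t : Fin n) (x : E n) (i : Fin n) :
    signFlip t x i = if i = t then -x i else x i := by
  rw [signFlip, LinearIsometryEquiv.piLpCongrRight_apply]
  by_cases h : i = t <;> simp [h]

def IsExchangeable (μ : Measure (E n)) : Prop :=
  ∀ σ : Equiv.Perm (Fin n), MeasurePreserving (LinearIsometryEquiv.piLpCongrLeft 2 ℝ ℝ σ) μ μ

def IsUnconditional (μ : Measure (E n)) : Prop := ∀ t, MeasurePreserving (signFlip t) μ μ

def moment2 (μ : Measure (E n)) (i j : Fin n) : ℝ := ∫ x, x i * x j ∂μ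

def moment4 (μ : Measure (E n)) (i j k l : Fin n) : ℝ := ∫ x, x i * x j * x k * x l ∂μ

section Moments

variable {μ : Measure (E n)}

lemma integral_comp_of_measurePreserving {T : E n ≃ₗᵢ[ℝ] E n} (hT : MeasurePreserving T μ μ)
    (f : E n → ℝ) : ∫ x, f (T x) ∂μ = ∫ x, f x ∂μ :=
  hT.integral_comp T.toHomeomorph.measurableEmbedding f

lemma moment2_comp_perm (hperm : IsExchangeable μ) (σ : Equiv.Perm (Fin n)) (i j : Fin n) :
    moment2 μ (σ i) (σ j) = moment2 μ i j := by
  simpa [moment2] using integral_comp_of_measurePreserving (hperm σ.symm) fun y => y i * y j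

lemma moment4_comp_perm (hperm : IsExchangeable μ) (σ : Equiv.Perm (Fin n)) (i j k l : Fin n) :
    moment4 μ (σ i) (σ j) (σ k) (σ l) = moment4 μ i j k l := by
  simpa [moment4] using
    integral_comp_of_measurePreserving (hperm σ.symm) fun y => y i * y j * y k * y l

lemma moment2_eq_zero_of_ne (hsign : IsUnconditional μ) {i j : Fin n} (hij : i ≠ j) :
    moment2 μ i j = 0 := by
  have h := integral_comp_of_measurePreserving (hsign i) fun y => y i * y j
  simp only [signFlip_apply, if_pos, hij.symm, if_false, neg_mul, integral_neg] at h
  rw [moment2]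
  linarith

lemma moment4_eq_zero_of_ne (hsign : IsUnconditional μ) {i j k l : Fin n}
    (hj : j ≠ i) (hk : k ≠ i) (hl : l ≠ i) : moment4 μ i j k l = 0 := by
  have h := integral_comp_of_measurePreserving (hsign i) fun y => y i * y j * y k * y l
  simp only [signFlip_apply, if_pos, hj, hk, hl, if_false, neg_mul, integral_neg] at h
  rw [moment4]
  linarith

lemma moment4_congr {i j k l i' j' k' l' : Fin n}
    (h : ∀ x : E n, x i * x j * x k * x l = x i' * x j' * x k' * x l') :
    moment4 μ i j k l = moment4 μ i' j' k' l' := by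
  simp only [moment4, h]

lemma moment2_self (hperm : IsExchangeable μ) (i₀ i : Fin n) :
    moment2 μ i i = moment2 μ i₀ i₀ := by
  simpa using moment2_comp_perm hperm (Equiv.swap i₀ i) i₀ i₀

lemma moment4_self (hperm : IsExchangeable μ) (i₀ i : Fin n) :
    moment4 μ i i i i = moment4 μ i₀ i₀ i₀ i₀ := by
  simpa using moment4_comp_perm hperm (Equiv.swap i₀ i) i₀ i₀ i₀ i₀

lemma moment4_pair (hperm : IsExchangeable μ) {i₀ i₁ i j : Fin n} (h01 : i₀ ≠ i₁) (hij : i ≠ j) :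
    moment4 μ i i j j = moment4 μ i₀ i₀ i₁ i₁ := by
  set j' := Equiv.swap i₀ i j
  have hj' : i₀ ≠ j' := fun h => hij (by simpa [j'] using congrArg (Equiv.swap i₀ i) h)
  -- `swap i₀ i * swap i₁ j'` sends `i₀ ↦ i` and `i₁ ↦ j`
  have h := moment4_comp_perm hperm (Equiv.swap i₀ i * Equiv.swap i₁ j') i₀ i₀ i₁ i₁
  simpa [Equiv.swap_apply_of_ne_of_ne h01 hj', j'] using h

lemma moment2_eq (hperm : IsExchangeable μ) (hsign : IsUnconditional μ) (i₀ i j : Fin n) :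
    moment2 μ i j = moment2 μ i₀ i₀ * if i = j then 1 else 0 := by
  rcases eq_or_ne i j with rfl | hij
  · simp [moment2_self hperm i₀]
  · simp [moment2_eq_zero_of_ne hsign hij, hij]

lemma moment4_eq (hperm : IsExchangeable μ) (hsign : IsUnconditional μ) {i₀ i₁ : Fin n}
    (h01 : i₀ ≠ i₁) (i j k l : Fin n) :
    moment4 μ i j k l =
      moment4 μ i₀ i₀ i₁ i₁ * ((if i = j then 1 else 0) * (if k = l then 1 else 0) +
        (if i = k then 1 else 0) * (if j = l then 1 else 0) +
        (if i = l then 1 else 0) * (if j = k then 1 else 0)) +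
      (moment4 μ i₀ i₀ i₀ i₀ - 3 * moment4 μ i₀ i₀ i₁ i₁) *
        ((if i = j then 1 else 0) * (if i = k then 1 else 0) * (if i = l then 1 else 0)) := by
  rcases eq_or_ne i j with rfl | hij
  · rcases eq_or_ne i k with rfl | hik
    · rcases eq_or_ne i l with rfl | hil
      · rw [moment4_self hperm i₀]
        simp only [if_true]
        ring
      · rw [show moment4 μ i i i l = moment4 μ l i i i from moment4_congr fun _ => by ring,
          moment4_eq_zero_of_ne hsign hil hil hil]
        simp [hil]
    · rcases eq_or_ne k l with rfl | hkl
      · rw [moment4_pair hperm h01 hik]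
        simp [hik]
      · rw [show moment4 μ i i k l = moment4 μ k i i l from moment4_congr fun _ => by ring,
          moment4_eq_zero_of_ne hsign hik hik hkl.symm]
        simp [hik, hkl]
  · rcases eq_or_ne i k with rfl | hik
    · rcases eq_or_ne j l with rfl | hjl
      · rw [show moment4 μ i j i j = moment4 μ i i j j from moment4_congr fun _ => by ring,
          moment4_pair hperm h01 hij]
        simp [hij]
      · rw [show moment4 μ i j i l = moment4 μ j i i l from moment4_congr fun _ => by ring,
          moment4_eq_zero_of_ne hsign hij hij hjl.symm]
        simp [hij, hjl, hij.symm]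
    · rcases eq_or_ne i l with rfl | hil
      · rcases eq_or_ne j k with rfl | hjk
        · rw [show moment4 μ i j j i = moment4 μ i i j j from moment4_congr fun _ => by ring,
            moment4_pair hperm h01 hij]
          simp [hij]
        · rw [show moment4 μ i j k i = moment4 μ j i k i from moment4_congr fun _ => by ring,
            moment4_eq_zero_of_ne hsign hij hjk.symm hij]
          simp [hij, hik, hjk]
      · rw [moment4_eq_zero_of_ne hsign hij.symm hik.symm hil.symm]
        simp [hij, hik, hil]

lemma inner_sq_eq_sum (x a : E n) : ⟪x, a⟫ ^ 2 = ∑ i, ∑ j, a i * a j * (x i * x j) := by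
  simp only [PiLp.inner_apply, RCLike.inner_apply, conj_trivial, sq, Finset.sum_mul_sum]
  exact Finset.sum_congr rfl fun i _ => Finset.sum_congr rfl fun j _ => by ring

lemma integral_inner_sq (h2 : ∀ i j, Integrable (fun x : E n => x i * x j) μ) (a : E n) :
    ∫ x, ⟪x, a⟫ ^ 2 ∂μ = ∑ i, ∑ j, a i * a j * moment2 μ i j := by
  simp_rw [inner_sq_eq_sum]
  simp (disch := intros; fun_prop) only [integral_finsetSum, integral_const_mul, moment2]

lemma integral_inner_sq_mul_inner_sq
    (h4 : ∀ i j k l, Integrable (fun x : E n => x i * x j * x k * x l) μ) (a b : E n) :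
    ∫ x, ⟪x, a⟫ ^ 2 * ⟪x, b⟫ ^ 2 ∂μ =
      ∑ i, ∑ j, ∑ k, ∑ l, a i * a j * (b k * b l) * moment4 μ i j k l := by
  have hexp : ∀ x : E n, ⟪x, a⟫ ^ 2 * ⟪x, b⟫ ^ 2 =
      ∑ i, ∑ j, ∑ k, ∑ l, a i * a j * (b k * b l) * (x i * x j * x k * x l) := by
    intro x
    simp only [inner_sq_eq_sum, Finset.sum_mul]
    simp only [Finset.mul_sum]
    exact Finset.sum_congr rfl fun i _ => Finset.sum_congr rfl fun j _ =>
      Finset.sum_congr rfl fun k _ => Finset.sum_congr rfl fun l _ => by ring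
  simp_rw [hexp]
  simp (disch := intros; fun_prop) only [integral_finsetSum, integral_const_mul, moment4]

lemma integral_inner_sq_eq (hperm : IsExchangeable μ) (hsign : IsUnconditional μ)
    (h2 : ∀ i j, Integrable (fun x : E n => x i * x j) μ) (i₀ : Fin n) (a : E n) :
    ∫ x, ⟪x, a⟫ ^ 2 ∂μ = moment2 μ i₀ i₀ * ‖a‖ ^ 2 := by
  have hm := moment2_eq hperm hsign i₀
  generalize moment2 μ i₀ i₀ = m at hm ⊢
  simp only [integral_inner_sq h2, hm, mul_ite, mul_one, mul_zero, Finset.sum_ite_eq,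
    Finset.mem_univ, if_true, EuclideanSpace.real_norm_sq_eq, Finset.mul_sum]
  exact Finset.sum_congr rfl fun i _ => by ring

lemma integral_inner_sq_mul_inner_sq_eq (hperm : IsExchangeable μ) (hsign : IsUnconditional μ)
    (h4 : ∀ i j k l, Integrable (fun x : E n => x i * x j * x k * x l) μ)
    {i₀ i₁ : Fin n} (h01 : i₀ ≠ i₁) (a b : E n) :
    ∫ x, ⟪x, a⟫ ^ 2 * ⟪x, b⟫ ^ 2 ∂μ =
      moment4 μ i₀ i₀ i₁ i₁ * (‖a‖ ^ 2 * ‖b‖ ^ 2 + 2 * ⟪a, b⟫ ^ 2) +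
      (moment4 μ i₀ i₀ i₀ i₀ - 3 * moment4 μ i₀ i₀ i₁ i₁) * ∑ i, a i ^ 2 * b i ^ 2 := by
  have hm := moment4_eq hperm hsign h01 (μ := μ)
  generalize moment4 μ i₀ i₀ i₁ i₁ = B at hm ⊢
  generalize moment4 μ i₀ i₀ i₀ i₀ - 3 * B = C at hm ⊢
  simp only [integral_inner_sq_mul_inner_sq h4, hm, mul_add, Finset.sum_add_distrib, mul_ite,
    mul_one, mul_zero, Finset.sum_ite_eq, Finset.mem_univ, if_true, Finset.sum_const_zero,
    Finset.sum_ite_irrel, ← Finset.sum_mul]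
  have hnorm : ∑ i, ∑ j, a i * a i * (b j * b j) = ‖a‖ ^ 2 * ‖b‖ ^ 2 := by
    rw [EuclideanSpace.real_norm_sq_eq, EuclideanSpace.real_norm_sq_eq, Finset.sum_mul_sum]
    simp only [sq]
  have hinner : ∑ i, ∑ j, a i * a j * (b i * b j) = ⟪a, b⟫ ^ 2 := by
    simp only [PiLp.inner_apply, RCLike.inner_apply, conj_trivial, sq, Finset.sum_mul_sum]
    exact Finset.sum_congr rfl fun i _ => Finset.sum_congr rfl fun j _ => by ring
  have hinner_swap : ∑ i, ∑ j, a i * a j * (b j * b i) = ⟪a, b⟫ ^ 2 := by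
    rw [← hinner]
    exact Finset.sum_congr rfl fun i _ => Finset.sum_congr rfl fun j _ => by ring
  have hdiag : ∑ i, a i * a i * (b i * b i) = ∑ i, a i ^ 2 * b i ^ 2 :=
    Finset.sum_congr rfl fun i _ => by ring
  rw [hnorm, hinner, hinner_swap, hdiag]
  ring

theorem covf_eq_of_orthonormal (hperm : IsExchangeable μ) (hsign : IsUnconditional μ)
    (h2 : ∀ i j, Integrable (fun x : E n => x i * x j) μ)
    (h4 : ∀ i j k l, Integrable (fun x : E n => x i * x j * x k * x l) μ)
    {i₀ i₁ : Fin n} (h01 : i₀ ≠ i₁) {a b : E n} (ha : ‖a‖ = 1) (hb : ‖b‖ = 1)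
    (hab : ⟪a, b⟫ = 0) :
    covf μ a b = moment4 μ i₀ i₀ i₁ i₁ - moment2 μ i₀ i₀ ^ 2 +
      (moment4 μ i₀ i₀ i₀ i₀ - 3 * moment4 μ i₀ i₀ i₁ i₁) * ∑ i, a i ^ 2 * b i ^ 2 := by
  rw [covf, integral_inner_sq_mul_inner_sq_eq hperm hsign h4 h01,
    integral_inner_sq_eq hperm hsign h2 i₀, integral_inner_sq_eq hperm hsign h2 i₀, ha, hb, hab]
  ring

end Moments

section Ball

variable {p : ℝ}

lemma measurableSet_lpBall : MeasurableSet (lpBall n p) :=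
  measurableSet_le (Finset.measurable_sum _ fun i _ => by fun_prop) measurable_const

lemma measurePreserving_unif {K : Set (E n)} (hK : MeasurableSet K) {T : E n ≃ₗᵢ[ℝ] E n}
    (hT : T ⁻¹' K = K) : MeasurePreserving T (unif K) (unif K) := by
  have h := (T.measurePreserving.restrict_preimage hK).smul_measure (volume K)⁻¹
  rwa [hT] at h

instance isFiniteMeasure_unif (K : Set (E n)) : IsFiniteMeasure (unif K) := by
  constructor
  simp only [unif, Measure.smul_apply, Measure.restrict_apply MeasurableSet.univ, Set.univ_inter,
    smul_eq_mul]
  exact (ENNReal.inv_mul_le_one _).trans_lt ENNReal.one_lt_top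

lemma integrable_unif_of_abs_le {K : Set (E n)} (hK : MeasurableSet K) {f : E n → ℝ}
    (hf : Measurable f) {C : ℝ} (hC : ∀ x ∈ K, |f x| ≤ C) : Integrable f (unif K) := by
  refine Integrable.mono' (integrable_const C) hf.aestronglyMeasurable ?_
  filter_upwards [Measure.ae_smul_measure (ae_restrict_mem hK) _] with x hx
  exact hC x hx

lemma piLpCongrLeft_preimage_lpBall (σ : Equiv.Perm (Fin n)) :
    LinearIsometryEquiv.piLpCongrLeft 2 ℝ ℝ σ ⁻¹' lpBall n p = lpBall n p := by
  ext x
  simp only [Set.mem_preimage, lpBall, Set.mem_ofPred_eq,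
    LinearIsometryEquiv.piLpCongrLeft_apply, Equiv.piCongrLeft'_apply]
  rw [Equiv.sum_comp σ.symm fun i => |x i| ^ p]

lemma signFlip_preimage_lpBall (t : Fin n) : signFlip t ⁻¹' lpBall n p = lpBall n p := by
  ext x
  simp only [Set.mem_preimage, lpBall, Set.mem_ofPred_eq, signFlip_apply, apply_ite, abs_neg,
    ite_self]

lemma abs_le_one_of_mem_lpBall (hp : 0 < p) {x : E n} (hx : x ∈ lpBall n p) (i : Fin n) :
    |x i| ≤ 1 := by
  rw [← Real.rpow_le_rpow_iff (abs_nonneg _) zero_le_one hp, Real.one_rpow]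
  exact (Finset.single_le_sum (fun j _ => Real.rpow_nonneg (abs_nonneg (x j)) p)
    (Finset.mem_univ i)).trans hx

lemma integrable_unif_lpBall_mul (hp : 0 < p) (i j : Fin n) :
    Integrable (fun x : E n => x i * x j) (unif (lpBall n p)) := by
  refine integrable_unif_of_abs_le measurableSet_lpBall (by fun_prop) (C := 1) fun x hx => ?_
  have h := abs_le_one_of_mem_lpBall hp hx
  rw [abs_mul]
  exact mul_le_one₀ (h i) (abs_nonneg _) (h j)

lemma integrable_unif_lpBall_mul_mul_mul (hp : 0 < p) (i j k l : Fin n) :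
    Integrable (fun x : E n => x i * x j * x k * x l) (unif (lpBall n p)) := by
  refine integrable_unif_of_abs_le measurableSet_lpBall (by fun_prop) (C := 1) fun x hx => ?_
  have h := abs_le_one_of_mem_lpBall hp hx
  simp only [abs_mul]
  exact mul_le_one₀ (mul_le_one₀ (mul_le_one₀ (h i) (abs_nonneg _) (h j)) (abs_nonneg _) (h k))
    (abs_nonneg _) (h l)

end Ball

section Basis

variable {i j : Fin n}

lemma norm_stdb (i : Fin n) : ‖(stdb i : E n)‖ = 1 := by
  simp [stdb]

lemma inner_stdb_of_ne (h : i ≠ j) : ⟪stdb i, (stdb j : E n)⟫ = 0 := by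
  simp [stdb, EuclideanSpace.inner_single_left, h]

lemma sum_stdb_sq_mul_stdb_sq (h : i ≠ j) : ∑ k, stdb i k ^ 2 * stdb j k ^ 2 = 0 :=
  Finset.sum_eq_zero fun k _ => by by_cases hk : k = i <;> simp [stdb, hk, h]

lemma norm_inv_sqrt_two_smul_stdb_add (h : i ≠ j) : ‖(√2)⁻¹ • (stdb i + stdb j : E n)‖ = 1 := by
  rw [← pow_eq_one_iff_of_nonneg (norm_nonneg _) two_ne_zero, EuclideanSpace.real_norm_sq_eq,
    Fintype.sum_eq_add i j h fun k hk => by simp [stdb, hk.1, hk.2]]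
  simp [stdb, h, h.symm]
  norm_num

lemma norm_inv_sqrt_two_smul_stdb_sub (h : i ≠ j) : ‖(√2)⁻¹ • (stdb i - stdb j : E n)‖ = 1 := by
  rw [← pow_eq_one_iff_of_nonneg (norm_nonneg _) two_ne_zero, EuclideanSpace.real_norm_sq_eq,
    Fintype.sum_eq_add i j h fun k hk => by simp [stdb, hk.1, hk.2]]
  simp [stdb, h, h.symm]
  norm_num

lemma inner_inv_sqrt_two_smul_stdb_add_sub (h : i ≠ j) :
    ⟪(√2)⁻¹ • (stdb i + stdb j : E n), (√2)⁻¹ • (stdb i - stdb j)⟫ = 0 := by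
  simp [inner_add_left, inner_sub_right, inner_smul_left, inner_smul_right, norm_stdb,
    inner_stdb_of_ne h, inner_stdb_of_ne h.symm]

lemma sum_inv_sqrt_two_smul_stdb_sq_mul_sq (h : i ≠ j) :
    ∑ k, ((√2)⁻¹ • (stdb i + stdb j : E n)) k ^ 2 * ((√2)⁻¹ • (stdb i - stdb j : E n)) k ^ 2 =
      1 / 2 := by
  rw [Fintype.sum_eq_add i j h fun k hk => by simp [stdb, hk.1, hk.2]]
  simp [stdb, h, h.symm]
  norm_num

end Basis

/-- decomposition of `f(η₁,η₂)` on `B_p^n` in terms of the extremal values and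
`∑ η₁(i)²η₂(i)²`. -/
theorem covf_decomposition_Bpn
    (n : ℕ) (hn : 2 ≤ n) (p : ℝ) (hp : 1 ≤ p)
    (η₁ η₂ : E n) (hη₁ : ‖η₁‖ = 1) (hη₂ : ‖η₂‖ = 1) (hortho : ⟪η₁, η₂⟫ = 0) :
    covf (unif (lpBall n p)) η₁ η₂ =
      covf (unif (lpBall n p)) (stdb (⟨0, by omega⟩ : Fin n)) (stdb ⟨1, by omega⟩) +
      2 * (covf (unif (lpBall n p))
            ((Real.sqrt 2)⁻¹ • (stdb (⟨0, by omega⟩ : Fin n) + stdb ⟨1, by omega⟩))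
            ((Real.sqrt 2)⁻¹ • (stdb (⟨0, by omega⟩ : Fin n) - stdb ⟨1, by omega⟩)) -
          covf (unif (lpBall n p)) (stdb (⟨0, by omega⟩ : Fin n)) (stdb ⟨1, by omega⟩)) *
        ∑ i, η₁ i ^ 2 * η₂ i ^ 2 := by
  have hp₀ : 0 < p := by linarith
  have h01 : (⟨0, by omega⟩ : Fin n) ≠ ⟨1, by omega⟩ := by simp
  have hcovf := fun {a b : E n} => covf_eq_of_orthonormal (a := a) (b := b)
    (fun σ => measurePreserving_unif measurableSet_lpBall (piLpCongrLeft_preimage_lpBall σ))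
    (fun t => measurePreserving_unif measurableSet_lpBall (signFlip_preimage_lpBall t))
    (integrable_unif_lpBall_mul hp₀) (integrable_unif_lpBall_mul_mul_mul hp₀) h01
  rw [hcovf hη₁ hη₂ hortho, hcovf (norm_stdb _) (norm_stdb _) (inner_stdb_of_ne h01),
    hcovf (norm_inv_sqrt_two_smul_stdb_add h01) (norm_inv_sqrt_two_smul_stdb_sub h01)
      (inner_inv_sqrt_two_smul_stdb_add_sub h01),
    sum_stdb_sq_mul_stdb_sq h01, sum_inv_sqrt_two_smul_stdb_sq_mul_sq h01]
  ring
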